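/- With a ∈ ℝ \ {0, ±1}, G(z) = z² and G∗(z) = z(z + a)/(az + 1), the Hopf differential Q = −dG·dG∗/(G − G∗)² equals −2(az² + 2z + a)/(a²·z·(z + 1)²·(z − 1)²) dz², which has a pole of order 1 at z = 0 and poles of order 2 at z = 1 and z = −1. -/

import Mathlib

open Filter Topology

/-!
Clearing denominators gives `G - G∗ = a z (z - 1)(z + 1)/(a z + 1)`, from which the formula for
`Q` is a rational-function identity. The residual factor `p / q` of `Q` at each of `0, 1, -1` is
continuous with `p z₀ / q z₀ ≠ 0` exactly because `a ≠ 0, -1, 1` respectively, which gives the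
pole orders.
-/

theorem tendsto_mul_div_mul_nhdsNE {X 𝕜 : Type*} [TopologicalSpace X] [Field 𝕜]
    [TopologicalSpace 𝕜] [ContinuousInv₀ 𝕜] [ContinuousMul 𝕜] {p q h : X → 𝕜} {z₀ : X}
    (hp : ContinuousAt p z₀) (hq : ContinuousAt q z₀) (hq₀ : q z₀ ≠ 0)
    (hh : ∀ z ≠ z₀, h z ≠ 0) :
    Tendsto (fun z => h z * (p z / (h z * q z))) (𝓝[≠] z₀) (𝓝 (p z₀ / q z₀)) := by
  refine ((hp.div hq hq₀).tendsto.mono_left nhdsWithin_le_nhds).congr' ?_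
  filter_upwards [self_mem_nhdsWithin] with z hz
  rw [Pi.div_apply, mul_div_assoc', mul_div_mul_left _ _ (hh z hz)]

/-- The coefficient of `dz²` in the Hopf differential `Q`. -/
noncomputable def hopfCoeff (a z : ℂ) : ℂ :=
  -(2 * (a * z ^ 2 + 2 * z + a)) / (a ^ 2 * z * (z + 1) ^ 2 * (z - 1) ^ 2)

theorem hopf_differential_eq (a z : ℂ) (hd : a * z + 1 ≠ 0) :
    -((2 * z) * ((a * z ^ 2 + 2 * z + a) / (a * z + 1) ^ 2))
      / (z ^ 2 - z * (z + a) / (a * z + 1)) ^ 2 = hopfCoeff a z := by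
  have hGG : z ^ 2 - z * (z + a) / (a * z + 1) = a * z * (z - 1) * (z + 1) / (a * z + 1) := by
    rw [eq_div_iff hd, sub_mul, div_mul_cancel₀ _ hd]
    ring
  rw [hGG, hopfCoeff, div_pow, mul_div_assoc', neg_div,
    div_div_div_cancel_right₀ (pow_ne_zero 2 hd)]
  field_simp

theorem tendsto_mul_hopfCoeff_zero (a : ℂ) (ha : a ≠ 0) :
    Tendsto (fun z => z * hopfCoeff a z) (𝓝[≠] 0) (𝓝 (-2 / a)) := by
  have hlim := tendsto_mul_div_mul_nhdsNE (h := fun z => z)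
    (p := fun z => -(2 * (a * z ^ 2 + 2 * z + a)))
    (q := fun z => a ^ 2 * (z + 1) ^ 2 * (z - 1) ^ 2) (z₀ := 0) (by fun_prop) (by fun_prop)
    (by simp [ha]) (fun z hz => hz)
  convert hlim using 2 with z
  · simp only [hopfCoeff]; ring
  · field_simp; ring

theorem tendsto_sq_sub_one_mul_hopfCoeff_one (a : ℂ) (ha : a ≠ 0) :
    Tendsto (fun z => (z - 1) ^ 2 * hopfCoeff a z) (𝓝[≠] 1) (𝓝 (-(a + 1) / a ^ 2)) := by
  have hlim := tendsto_mul_div_mul_nhdsNE (h := fun z => (z - 1) ^ 2)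
    (p := fun z => -(2 * (a * z ^ 2 + 2 * z + a)))
    (q := fun z => a ^ 2 * z * (z + 1) ^ 2) (z₀ := 1) (by fun_prop) (by fun_prop)
    (by norm_num [ha]) (fun z hz => pow_ne_zero _ (sub_ne_zero.mpr hz))
  convert hlim using 2 with z
  · simp only [hopfCoeff]; ring
  · field_simp; ring

theorem tendsto_sq_add_one_mul_hopfCoeff_neg_one (a : ℂ) (ha : a ≠ 0) :
    Tendsto (fun z => (z + 1) ^ 2 * hopfCoeff a z) (𝓝[≠] (-1)) (𝓝 ((a - 1) / a ^ 2)) := by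
  have hlim := tendsto_mul_div_mul_nhdsNE (h := fun z => (z + 1) ^ 2)
    (p := fun z => -(2 * (a * z ^ 2 + 2 * z + a)))
    (q := fun z => a ^ 2 * z * (z - 1) ^ 2) (z₀ := -1) (by fun_prop) (by fun_prop)
    (by norm_num [ha]) (fun z hz => pow_ne_zero _ (by rwa [← sub_neg_eq_add, sub_ne_zero]))
  convert hlim using 2 with z
  · simp only [hopfCoeff]; ring
  · field_simp; ring

/-- for a ∈ ℝ \ {0, ±1}, G(z) = z², G∗(z) = z(z + a)/(az + 1),
dG = 2z dz, dG∗ = (az² + 2z + a)/(az + 1)² dz, the Hopf differential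
Q = −dG·dG∗/(G − G∗)² equals −2(az² + 2z + a)/(a² z (z + 1)² (z − 1)²) dz²,
with a pole of order 1 at z = 0 and poles of order 2 at z = ±1. -/
theorem stmt10 (a : ℝ) (ha : a ≠ 0) (ha1 : a ≠ 1) (ha2 : a ≠ -1) :
    (∀ z : ℂ, z ≠ 0 → z ≠ 1 → z ≠ -1 → (a : ℂ) * z + 1 ≠ 0 →
      -((2 * z) * (((a : ℂ) * z ^ 2 + 2 * z + (a : ℂ)) / ((a : ℂ) * z + 1) ^ 2))
          / (z ^ 2 - z * (z + (a : ℂ)) / ((a : ℂ) * z + 1)) ^ 2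
        = -(2 * ((a : ℂ) * z ^ 2 + 2 * z + (a : ℂ)))
            / ((a : ℂ) ^ 2 * z * (z + 1) ^ 2 * (z - 1) ^ 2)) ∧
    (∃ c : ℂ, c ≠ 0 ∧
      Tendsto (fun z : ℂ => z *
        (-(2 * ((a : ℂ) * z ^ 2 + 2 * z + (a : ℂ)))
          / ((a : ℂ) ^ 2 * z * (z + 1) ^ 2 * (z - 1) ^ 2))) (𝓝[≠] 0) (𝓝 c)) ∧
    (∃ c : ℂ, c ≠ 0 ∧
      Tendsto (fun z : ℂ => (z - 1) ^ 2 *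
        (-(2 * ((a : ℂ) * z ^ 2 + 2 * z + (a : ℂ)))
          / ((a : ℂ) ^ 2 * z * (z + 1) ^ 2 * (z - 1) ^ 2))) (𝓝[≠] 1) (𝓝 c)) ∧
    (∃ c : ℂ, c ≠ 0 ∧
      Tendsto (fun z : ℂ => (z + 1) ^ 2 *
        (-(2 * ((a : ℂ) * z ^ 2 + 2 * z + (a : ℂ)))
          / ((a : ℂ) ^ 2 * z * (z + 1) ^ 2 * (z - 1) ^ 2))) (𝓝[≠] (-1)) (𝓝 c)) := by
  have haC : (a : ℂ) ≠ 0 := Complex.ofReal_ne_zero.mpr ha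
  have ha1C : (a : ℂ) - 1 ≠ 0 := sub_ne_zero.mpr (Complex.ofReal_ne_one.mpr ha1)
  have ha2C : (a : ℂ) + 1 ≠ 0 := by
    rw [← sub_neg_eq_add, sub_ne_zero]; exact_mod_cast ha2
  refine ⟨fun z _ _ _ hd => hopf_differential_eq a z hd, ?_, ?_, ?_⟩
  · exact ⟨_, div_ne_zero (by norm_num) haC, tendsto_mul_hopfCoeff_zero a haC⟩
  · exact ⟨_, div_ne_zero (neg_ne_zero.mpr ha2C) (pow_ne_zero 2 haC),
      tendsto_sq_sub_one_mul_hopfCoeff_one a haC⟩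
  · exact ⟨_, div_ne_zero ha1C (pow_ne_zero 2 haC),
      tendsto_sq_add_one_mul_hopfCoeff_neg_one a haC⟩
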